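/- Define, for real m > −1 and real λ such that D(m,λ) := (1+m)⁴ + (π⁴λ²/3)(2+m) − π²λ(1+m)² ≠ 0: η(m,λ) = 4π²λ ((1+m)² − (π²λ/2)(2+m)) / D(m,λ), β_m(m,λ) = −(2 + η(m,λ)) m − (10π²λ/(1+m)²)(1 + η(m,λ)/6), and β_λ(m,λ) = −2 η(m,λ) λ + (4π²λ²/(1+m)³)(1 + η(m,λ)/6) (1 − π²λ (1/(1+m)² + 1 + 1/(1+m))). Then there exists a non-Gaussian fixed point: a pair (m*, λ*) with −1 < m* < 0, λ* > 0 and D(m*,λ*) ≠ 0 such that β_m(m*,λ*) = 0 and β_λ(m*,λ*) = 0. -/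

import Mathlib

/-!
Write `A = π² λ`. For `m > -1` the common denominator `D` is a positive definite quadratic form
in `((1 + m)², A)`, so the fixed-point equations reduce to the vanishing of two polynomial
numerators. Both beta functions are affine in `η`, and eliminating `η` between them leaves a
quadratic equation in `A` which, for `-1 < m < 0`, has exactly one positive root `A(m)`,
continuous in `m`. Along this curve the vanishing of the mass numerator implies that of the
coupling numerator, and the mass numerator changes sign between `m = -3/5` and `m = -1/2`;
the intermediate value theorem gives the fixed point.
-/

open Real

/-- Denominator of the improved anomalous dimension. -/
noncomputable def Dden (m lam : ℝ) : ℝ :=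
  (1 + m) ^ 4 + (π ^ 4 * lam ^ 2 / 3) * (2 + m) - π ^ 2 * lam * (1 + m) ^ 2

/-- Improved anomalous dimension from the melonic structure equations. -/
noncomputable def etaImp (m lam : ℝ) : ℝ :=
  4 * π ^ 2 * lam * ((1 + m) ^ 2 - (π ^ 2 * lam / 2) * (2 + m)) / Dden m lam

/-- Improved beta function of the dimensionless mass squared. -/
noncomputable def betaMImp (m lam : ℝ) : ℝ :=
  -(2 + etaImp m lam) * m - (10 * π ^ 2 * lam / (1 + m) ^ 2) * (1 + etaImp m lam / 6)

/-- Improved beta function of the dimensionless quartic melonic coupling. -/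
noncomputable def betaLamImp (m lam : ℝ) : ℝ :=
  -2 * etaImp m lam * lam
    + (4 * π ^ 2 * lam ^ 2 / (1 + m) ^ 3) * (1 + etaImp m lam / 6) *
      (1 - π ^ 2 * lam * (1 / (1 + m) ^ 2 + 1 + 1 / (1 + m)))

noncomputable section

def posRoot (a b c : ℝ) : ℝ := (-b + √(discrim a b c)) / (2 * a)

lemma sq_lt_discrim {a b c : ℝ} (ha : 0 < a) (hc : c < 0) : b ^ 2 < discrim a b c := by
  rw [discrim]; nlinarith

lemma posRoot_pos {a b c : ℝ} (ha : 0 < a) (hc : c < 0) : 0 < posRoot a b c := by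
  have : b < √(discrim a b c) := Real.lt_sqrt_of_sq_lt (sq_lt_discrim ha hc)
  exact div_pos (by linarith) (by positivity)

lemma posRoot_isRoot {a b c : ℝ} (ha : 0 < a) (hc : c < 0) :
    a * posRoot a b c ^ 2 + b * posRoot a b c + c = 0 := by
  have hs : discrim a b c = √(discrim a b c) * √(discrim a b c) :=
    (Real.mul_self_sqrt (le_trans (sq_nonneg b) (sq_lt_discrim ha hc).le)).symm
  rw [sq]
  exact (quadratic_eq_zero_iff ha.ne' hs _).2 (Or.inl rfl)

lemma quadratic_eq_sub_posRoot_mul {a b c : ℝ} (ha : 0 < a) (hc : c < 0) (r : ℝ) :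
    a * r ^ 2 + b * r + c = (r - posRoot a b c) * (a * (r + posRoot a b c) + b) := by
  linear_combination posRoot_isRoot ha hc (b := b)

/-- `a x + b = (b + √Δ) / 2 > 0` at the positive root `x`, because `√Δ > |b|`. -/
lemma posRoot_cofactor_pos {a b c r : ℝ} (ha : 0 < a) (hc : c < 0) (hr : 0 ≤ r) :
    0 < a * (r + posRoot a b c) + b := by
  have hb : -b < √(discrim a b c) :=
    Real.lt_sqrt_of_sq_lt (by rw [neg_sq]; exact sq_lt_discrim ha hc)
  have hax : a * posRoot a b c + b = (b + √(discrim a b c)) / 2 := by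
    rw [posRoot]; field_simp; ring
  nlinarith [mul_nonneg ha.le hr]

lemma lt_posRoot_of_neg {a b c r : ℝ} (ha : 0 < a) (hc : c < 0) (hr : 0 ≤ r)
    (h : a * r ^ 2 + b * r + c < 0) : r < posRoot a b c := by
  rw [quadratic_eq_sub_posRoot_mul ha hc] at h
  exact sub_neg.1 (neg_of_mul_neg_left h (posRoot_cofactor_pos ha hc hr).le)

lemma posRoot_lt_of_pos {a b c r : ℝ} (ha : 0 < a) (hc : c < 0) (hr : 0 ≤ r)
    (h : 0 < a * r ^ 2 + b * r + c) : posRoot a b c < r := by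
  rw [quadratic_eq_sub_posRoot_mul ha hc] at h
  exact sub_pos.1 (pos_of_mul_pos_left h (posRoot_cofactor_pos ha hc hr).le)

def dPoly (m A : ℝ) : ℝ := (1 + m) ^ 4 + A ^ 2 * (2 + m) / 3 - A * (1 + m) ^ 2

def etaNum (m A : ℝ) : ℝ := 4 * A * (1 + m) ^ 2 - 2 * A ^ 2 * (2 + m)

def betaMNum (m A : ℝ) : ℝ :=
  -(2 * dPoly m A + etaNum m A) * m * (1 + m) ^ 2 - 10 * A * (dPoly m A + etaNum m A / 6)

def betaLamNum (m A : ℝ) : ℝ :=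
  -2 * etaNum m A * (1 + m) ^ 5
    + 4 * A * (dPoly m A + etaNum m A / 6) * ((1 + m) ^ 2 - A * (3 + 3 * m + m ^ 2))

/-- Both beta functions are affine in `η`; eliminating `η` between `betaMNum = 0` and
`betaLamNum = 0` leaves `elimPoly = 0`. -/
def elimPoly (m A : ℝ) : ℝ :=
  -2 * m * (3 + 3 * m + m ^ 2) * A ^ 2 + (15 * (1 + m) ^ 3 + 2 * m * (1 + m) ^ 2) * A
    + 3 * m * (1 + m) ^ 5

lemma Dden_eq (m lam : ℝ) : Dden m lam = dPoly m (π ^ 2 * lam) := by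
  rw [Dden, dPoly]; ring

/-- `dPoly m A = ((1 + m)² - A / 2)² + (5 + 4 m) A² / 12`. -/
lemma dPoly_pos {m : ℝ} (hm : -1 < m) (A : ℝ) : 0 < dPoly m A := by
  have hu : 0 < (1 + m) ^ 4 := pow_pos (by linarith) 4
  rw [dPoly]
  nlinarith [sq_nonneg ((1 + m) ^ 2 - A / 2), sq_nonneg A, sq_nonneg (A - (1 + m) ^ 2)]

lemma etaImp_eq (m lam : ℝ) :
    etaImp m lam = etaNum m (π ^ 2 * lam) / dPoly m (π ^ 2 * lam) := by
  rw [etaImp, Dden_eq, etaNum]; ring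

lemma betaMImp_eq_div {m : ℝ} (hm : -1 < m) (lam : ℝ) :
    betaMImp m lam = betaMNum m (π ^ 2 * lam) / ((1 + m) ^ 2 * dPoly m (π ^ 2 * lam)) := by
  have hu : (1 + m) ≠ 0 := by linarith
  have hD := (dPoly_pos hm (π ^ 2 * lam)).ne'
  rw [eq_div_iff (by positivity), betaMImp, etaImp_eq, betaMNum]
  field_simp

lemma betaLamImp_eq_div {m : ℝ} (hm : -1 < m) (lam : ℝ) :
    betaLamImp m lam
      = lam * betaLamNum m (π ^ 2 * lam) / ((1 + m) ^ 5 * dPoly m (π ^ 2 * lam)) := by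
  have hu : (1 + m) ≠ 0 := by linarith
  have hD := (dPoly_pos hm (π ^ 2 * lam)).ne'
  rw [eq_div_iff (by positivity), betaLamImp, etaImp_eq, betaLamNum]
  field_simp
  ring

lemma betaLamNum_eq_zero {m A : ℝ} (hA : A ≠ 0) (hM : betaMNum m A = 0)
    (hq : elimPoly m A = 0) : betaLamNum m A = 0 := by
  rw [betaMNum] at hM
  rw [elimPoly] at hq
  have h : 5 * A * betaLamNum m A = 0 := by
    rw [betaLamNum]
    linear_combination
      (-(1 + m) ^ 2 * (2 * dPoly m A + etaNum m A)) * hq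
        - (3 * (1 + m) ^ 5 + 2 * A * ((1 + m) ^ 2 - A * (3 + 3 * m + m ^ 2))) * hM
  simpa [hA] using h

def curveA (m : ℝ) : ℝ :=
  posRoot (-2 * m * (3 + 3 * m + m ^ 2)) (15 * (1 + m) ^ 3 + 2 * m * (1 + m) ^ 2)
    (3 * m * (1 + m) ^ 5)

lemma elimPoly_lead_pos {m : ℝ} (hm : m < 0) : 0 < -2 * m * (3 + 3 * m + m ^ 2) := by
  nlinarith [sq_nonneg (m + 3 / 2)]

lemma elimPoly_const_neg {m : ℝ} (h1 : -1 < m) (h0 : m < 0) : 3 * m * (1 + m) ^ 5 < 0 := by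
  have : 0 < (1 + m) ^ 5 := pow_pos (by linarith) 5
  nlinarith

lemma curveA_pos {m : ℝ} (h1 : -1 < m) (h0 : m < 0) : 0 < curveA m :=
  posRoot_pos (elimPoly_lead_pos h0) (elimPoly_const_neg h1 h0)

lemma elimPoly_curveA {m : ℝ} (h1 : -1 < m) (h0 : m < 0) : elimPoly m (curveA m) = 0 :=
  posRoot_isRoot (elimPoly_lead_pos h0) (elimPoly_const_neg h1 h0)

lemma lt_curveA_of_elimPoly_neg {m A : ℝ} (h1 : -1 < m) (h0 : m < 0) (hA : 0 ≤ A)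
    (h : elimPoly m A < 0) : A < curveA m :=
  lt_posRoot_of_neg (elimPoly_lead_pos h0) (elimPoly_const_neg h1 h0) hA h

lemma curveA_lt_of_elimPoly_pos {m A : ℝ} (h1 : -1 < m) (h0 : m < 0) (hA : 0 ≤ A)
    (h : 0 < elimPoly m A) : curveA m < A :=
  posRoot_lt_of_pos (elimPoly_lead_pos h0) (elimPoly_const_neg h1 h0) hA h

lemma continuousOn_curveA : ContinuousOn curveA (Set.Iio 0) := by
  refine ContinuousOn.div (by unfold discrim; fun_prop) (by fun_prop) fun m hm => ?_
  exact (mul_pos two_pos (elimPoly_lead_pos hm)).ne'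

lemma continuousOn_betaMNum_curveA {a b : ℝ} (hb : b < 0) :
    ContinuousOn (fun m => betaMNum m (curveA m)) (Set.Icc a b) := by
  have hcurve := continuousOn_curveA.mono fun x (hx : x ∈ Set.Icc a b) =>
    show x < 0 from hx.2.trans_lt hb
  unfold betaMNum dPoly etaNum
  fun_prop

lemma betaMNum_curveA_neg : betaMNum (-3 / 5) (curveA (-3 / 5)) < 0 := by
  have hlo : 227 / 10000 < curveA (-3 / 5) :=
    lt_curveA_of_elimPoly_neg (by norm_num) (by norm_num) (by norm_num) (by norm_num [elimPoly])
  have hhi : curveA (-3 / 5) < 228 / 10000 :=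
    curveA_lt_of_elimPoly_pos (by norm_num) (by norm_num) (by norm_num) (by norm_num [elimPoly])
  rw [betaMNum, dPoly, etaNum]
  nlinarith [mul_pos (sub_pos.2 hlo) (sub_pos.2 hhi)]

lemma betaMNum_curveA_pos : 0 < betaMNum (-1 / 2) (curveA (-1 / 2)) := by
  have hlo : 28 / 1000 < curveA (-1 / 2) :=
    lt_curveA_of_elimPoly_neg (by norm_num) (by norm_num) (by norm_num) (by norm_num [elimPoly])
  have hhi : curveA (-1 / 2) < 281 / 10000 :=
    curveA_lt_of_elimPoly_pos (by norm_num) (by norm_num) (by norm_num) (by norm_num [elimPoly])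
  rw [betaMNum, dPoly, etaNum]
  nlinarith [mul_pos (sub_pos.2 hlo) (sub_pos.2 hhi)]

end

/-- Existence of a non-Gaussian (Wilson–Fisher-like) fixed point of the improved
melonic flow equations. -/
theorem exists_nonGaussian_fixed_point_improved :
    ∃ m lam : ℝ, -1 < m ∧ m < 0 ∧ 0 < lam ∧ Dden m lam ≠ 0 ∧
      betaMImp m lam = 0 ∧ betaLamImp m lam = 0 := by
  obtain ⟨m, ⟨hm_lo, hm_hi⟩, hM : betaMNum m (curveA m) = 0⟩ :=
    intermediate_value_Icc (by norm_num) (continuousOn_betaMNum_curveA (by norm_num))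
      ⟨betaMNum_curveA_neg.le, betaMNum_curveA_pos.le⟩
  have h1 : -1 < m := by linarith
  have h0 : m < 0 := by linarith
  set A := curveA m
  have hA : 0 < A := curveA_pos h1 h0
  have hlam : π ^ 2 * (A / π ^ 2) = A := mul_div_cancel₀ A (by positivity)
  refine ⟨m, A / π ^ 2, h1, h0, by positivity, ?_, ?_, ?_⟩
  · rw [Dden_eq, hlam]
    exact (dPoly_pos h1 A).ne'
  · rw [betaMImp_eq_div h1, hlam, hM, zero_div]
  · rw [betaLamImp_eq_div h1, hlam, betaLamNum_eq_zero hA.ne' hM (elimPoly_curveA h1 h0),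
      mul_zero, zero_div]
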